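/- Let 0 < A, λ, α < 1 with A ≠ λ^α, let B, R₀ ≥ 0, and let φ : [0,∞) → [0,∞) be an increasing function such that φ(λR) ≤ A φ(R) + B R^α for all R ≤ R₀. Then for every R ≤ R₀ and every r ≤ R: φ(r) ≤ (1/A) (r/R)^{min{log_λ A, α}} [ φ(R) + B R^α / |A − λ^α| ]. -/

import Mathlib

open MeasureTheory Set
open scoped ENNReal Topology

noncomputable section

/-- Points of the first Heisenberg group ℍ¹, identified with ℝ³ = ℝ × ℝ × ℝ;
a point `x` has coordinates `x₁ = x.1`, `x₂ = x.2.1`, `z = x.2.2`. -/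
abbrev H1 : Type := ℝ × ℝ × ℝ

/-- First horizontal vector field `X₁(x) = (1, 0, -x₂/2)`. -/
def X1vec (x : H1) : H1 := (1, 0, -x.2.1 / 2)

/-- Second horizontal vector field `X₂(x) = (0, 1, x₁/2)`. -/
def X2vec (x : H1) : H1 := (0, 1, x.1 / 2)

/-- Vertical vector field `T = ∂_z`. -/
def Tvec : H1 := (0, 0, 1)

/-- Horizontal derivative `X_i u (x)`: derivative of `u` at `x` in direction `X_i(x)`
(`i = 0` corresponds to `X₁`, `i = 1` to `X₂`). -/
def XD (i : Fin 2) (u : H1 → ℝ) (x : H1) : ℝ :=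
  fderiv ℝ u x (if i = 0 then X1vec x else X2vec x)

/-- Vertical derivative `T u`. -/
def TD (u : H1 → ℝ) (x : H1) : ℝ := fderiv ℝ u x Tvec

/-- Horizontal gradient `∇_H u = (X₁ u, X₂ u)`. -/
def horGrad (u : H1 → ℝ) (x : H1) : ℝ × ℝ := (XD 0 u x, XD 1 u x)

/-- Euclidean norm on ℝ². -/
def norm2 (z : ℝ × ℝ) : ℝ := Real.sqrt (z.1 ^ 2 + z.2 ^ 2)

/-- An admissible (absolutely continuous, subunit horizontal) curve on `[0,T]`:
there are coefficients `a, b` with `a² + b² ≤ 1` on `[0,T]` such that `Γ` is the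
integral of `t ↦ a t • X₁(Γ t) + b t • X₂(Γ t)`. -/
def IsHorizontalCurve (Γ : ℝ → H1) (T : ℝ) : Prop :=
  ∃ a b : ℝ → ℝ,
    (∀ t ∈ Icc (0:ℝ) T, a t ^ 2 + b t ^ 2 ≤ 1) ∧
    (∀ t ∈ Icc (0:ℝ) T,
      Γ t = Γ 0 + ∫ s in (0:ℝ)..t, (a s • X1vec (Γ s) + b s • X2vec (Γ s)))

/-- Carnot–Carathéodory distance on ℍ¹. -/
def dcc (x y : H1) : ℝ :=
  sInf {T : ℝ | 0 < T ∧ ∃ Γ : ℝ → H1, Γ 0 = x ∧ Γ T = y ∧ IsHorizontalCurve Γ T}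

/-- Open Carnot–Carathéodory ball of center `x` and radius `r`. -/
def ccBall (x : H1) (r : ℝ) : Set H1 := {y | dcc x y < r}

/-- `B ⊂⊂ Ω`: the closure of `B` is a compact subset of `Ω`. -/
def CompactlyContained (B Ω : Set H1) : Prop :=
  IsCompact (closure B) ∧ closure B ⊆ Ω

/-- Lebesgue measure of a set, as a real number. -/
def measReal (s : Set H1) : ℝ := (volume s).toReal

/-- Essential supremum of `f` on `s` (w.r.t. Lebesgue measure). -/
def essSupOn (f : H1 → ℝ) (s : Set H1) : ℝ := essSup f (volume.restrict s)

/-- Essential infimum of `f` on `s`. -/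
def essInfOn (f : H1 → ℝ) (s : Set H1) : ℝ := essInf f (volume.restrict s)

/-- Essential oscillation of `f` on `s`. -/
def oscOn (f : H1 → ℝ) (s : Set H1) : ℝ := essSupOn f s - essInfOn f s

/-- `L^∞` norm of `f` on `s`. -/
def linftyOn (f : H1 → ℝ) (s : Set H1) : ℝ := essSupOn (fun x => |f x|) s

/-- Test functions on `Ω`: smooth compactly supported with support inside `Ω`. -/
def IsTestFun (Ω : Set H1) (φ : H1 → ℝ) : Prop :=
  ContDiff ℝ (⊤ : ℕ∞) φ ∧ HasCompactSupport φ ∧ tsupport φ ⊆ Ω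

/-- `g = (g₁, g₂)` is the weak horizontal gradient of `f` on `Ω`. -/
def IsWeakHorGrad (Ω : Set H1) (f : H1 → ℝ) (g : H1 → ℝ × ℝ) : Prop :=
  ∀ φ : H1 → ℝ, IsTestFun Ω φ →
    (∫ x in Ω, f x * XD 0 φ x) = -∫ x in Ω, (g x).1 * φ x ∧
    (∫ x in Ω, f x * XD 1 φ x) = -∫ x in Ω, (g x).2 * φ x

/-- Local `L^p` membership on `Ω`. -/
def MemLocLp {E : Type*} [NormedAddCommGroup E] (p : ℝ≥0∞) (f : H1 → E) (Ω : Set H1) : Prop :=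
  ∀ K : Set H1, K ⊆ Ω → IsCompact K → MemLp f p (volume.restrict K)

/-- `a_i(z) = (δ² + |z|²)^{(p−2)/2} z_i` (`i = 0` is `a₁`, `i = 1` is `a₂`). -/
def aFun (δ p : ℝ) (i : Fin 2) (z : ℝ × ℝ) : ℝ :=
  (δ ^ 2 + z.1 ^ 2 + z.2 ^ 2) ^ ((p - 2) / 2) * (if i = 0 then z.1 else z.2)

/-- `∂_{z_j} a_i`. -/
def aDer (δ p : ℝ) (i j : Fin 2) (z : ℝ × ℝ) : ℝ :=
  fderiv ℝ (aFun δ p i) z (if j = 0 then ((1 : ℝ), (0 : ℝ)) else ((0 : ℝ), (1 : ℝ)))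

/-- `∂_{z_s} ∂_{z_j} a_i`. -/
def aDer2 (δ p : ℝ) (i j s : Fin 2) (z : ℝ × ℝ) : ℝ :=
  fderiv ℝ (aDer δ p i j) z (if s = 0 then ((1 : ℝ), (0 : ℝ)) else ((0 : ℝ), (1 : ℝ)))

/-- `u` is a pointwise solution of the non-degenerate `p`-Laplace equation
`X₁(a₁(∇_H u)) + X₂(a₂(∇_H u)) = 0` on `Ω`. -/
def IsPLaplaceSolution (δ p : ℝ) (Ω : Set H1) (u : H1 → ℝ) : Prop :=
  ∀ x ∈ Ω,
    XD 0 (fun y => aFun δ p 0 (horGrad u y)) x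
      + XD 1 (fun y => aFun δ p 1 (horGrad u y)) x = 0

/-- `w = δ² + |∇_H u|²`. -/
def wFun (δ : ℝ) (u : H1 → ℝ) (x : H1) : ℝ :=
  δ ^ 2 + (XD 0 u x) ^ 2 + (XD 1 u x) ^ 2

/-- `μ(R) = max_{l=1,2} ‖X_l u‖_{L^∞(B_R)}` for the ball centered at `x₀`. -/
def muMax (u : H1 → ℝ) (x₀ : H1) (R : ℝ) : ℝ :=
  max (linftyOn (XD 0 u) (ccBall x₀ R)) (linftyOn (XD 1 u) (ccBall x₀ R))

/-- Sup norm of a real function on ℍ¹. -/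
def supNorm (f : H1 → ℝ) : ℝ := ⨆ x : H1, |f x|

/-- Sup norm of `|∇_H ξ|`. -/
def supNormGrad (ξ : H1 → ℝ) : ℝ := ⨆ x : H1, norm2 (horGrad ξ x)

/-- Squared norm of the horizontal Hessian, `|∇²_H u|² = Σ_{i,j} (X_i X_j u)²`. -/
def hessSq (u : H1 → ℝ) (x : H1) : ℝ :=
  ∑ i : Fin 2, ∑ j : Fin 2, (XD i (XD j u) x) ^ 2

/-- Superlevel set `A⁺_{k,r}(f)` for the ball centered at `x₀`. -/
def supLevel (x₀ : H1) (f : H1 → ℝ) (k r : ℝ) : Set H1 :=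
  ccBall x₀ r ∩ {x | k < f x}

/-- Sublevel set `A⁻_{k,r}(f)` for the ball centered at `x₀`. -/
def subLevel (x₀ : H1) (f : H1 → ℝ) (k r : ℝ) : Set H1 :=
  ccBall x₀ r ∩ {x | f x < k}

/-- The `DG⁺(γ, χ, q)` inequality at level `h` for concentric radii `r' < r`,
for a function `f` with (weak) horizontal gradient `g`. -/
def DGIneq (x₀ : H1) (f : H1 → ℝ) (g : H1 → ℝ × ℝ) (γ χ q h r' r : ℝ) : Prop :=
  ∫ x in supLevel x₀ f h r', norm2 (g x) ^ 2 ≤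
    γ / (r - r') ^ 2 * (essSupOn (fun x => max (f x - h) 0) (ccBall x₀ r)) ^ 2
        * measReal (supLevel x₀ f h r)
      + χ * measReal (supLevel x₀ f h r) ^ (1 - 2 / q)

end

/-!
Iterating the recursion `k` times gives
`φ(λᵏR) ≤ Aᵏ φ(R) + B R^α (Aᵏ - λ^{αk}) / (A - λ^α) ≤ Mᵏ (φ(R) + B R^α / |A - λ^α|)`
with `M = max A λ^α`, and `M = λ^β` for `β = min (log_λ A) α`. Given `r`, choose `k`
with `λ^{k+1} < r/R ≤ λᵏ`; monotonicity gives `φ(r) ≤ φ(λᵏR)`, and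
`Mᵏ = M^{k+1}/M ≤ (r/R)^β / A`.
-/

lemma pow_sub_pow_div_sub_le_max_pow_div_abs {a b : ℝ} (ha : 0 ≤ a) (hb : 0 ≤ b) (k : ℕ) :
    (a ^ k - b ^ k) / (a - b) ≤ max a b ^ k / |a - b| := by
  have hsign : 0 ≤ (a ^ k - b ^ k) / (a - b) := by
    rcases le_total a b with hab | hab
    · exact div_nonneg_of_nonpos (by linarith [pow_le_pow_left₀ ha hab k]) (by linarith)
    · exact div_nonneg (by linarith [pow_le_pow_left₀ hb hab k]) (by linarith)
  rw [← abs_of_nonneg hsign, abs_div]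
  gcongr
  exact abs_sub_le_of_nonneg_of_le (by positivity) (pow_le_pow_left₀ ha (le_max_left a b) k)
    (by positivity) (pow_le_pow_left₀ hb (le_max_right a b) k)

section Iteration

variable {φ : ℝ → ℝ} {A lam α B R₀ R : ℝ}

lemma apply_pow_mul_le (hA : 0 ≤ A) (hlam : 0 ≤ lam) (hlam1 : lam ≤ 1) (hne : A ≠ lam ^ α)
    (hiter : ∀ R, 0 ≤ R → R ≤ R₀ → φ (lam * R) ≤ A * φ R + B * R ^ α)
    (hR : 0 ≤ R) (hRR₀ : R ≤ R₀) (k : ℕ) :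
    φ (lam ^ k * R) ≤
      A ^ k * φ R + B * R ^ α * ((A ^ k - (lam ^ α) ^ k) / (A - lam ^ α)) := by
  induction k with
  | zero => simp
  | succ k ih =>
    have hkR : 0 ≤ lam ^ k * R := by positivity
    have hpow : (lam ^ k * R) ^ α = (lam ^ α) ^ k * R ^ α := by
      rw [Real.mul_rpow (by positivity) hR, Real.rpow_pow_comm hlam]
    have hsub : A - lam ^ α ≠ 0 := sub_ne_zero.mpr hne
    calc φ (lam ^ (k + 1) * R) = φ (lam * (lam ^ k * R)) := by ring_nf
      _ ≤ A * φ (lam ^ k * R) + B * (lam ^ k * R) ^ α :=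
          hiter _ hkR ((mul_le_of_le_one_left hR (pow_le_one₀ hlam hlam1)).trans hRR₀)
      _ ≤ A * (A ^ k * φ R + B * R ^ α * ((A ^ k - (lam ^ α) ^ k) / (A - lam ^ α)))
            + B * ((lam ^ α) ^ k * R ^ α) := by
          rw [hpow]; gcongr
      _ = A ^ (k + 1) * φ R
            + B * R ^ α * ((A ^ (k + 1) - (lam ^ α) ^ (k + 1)) / (A - lam ^ α)) := by
          field_simp
          ring

lemma apply_pow_mul_le_max_pow (hA : 0 ≤ A) (hlam : 0 ≤ lam) (hlam1 : lam ≤ 1)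
    (hne : A ≠ lam ^ α) (hB : 0 ≤ B) (hφ0 : ∀ r, 0 ≤ r → 0 ≤ φ r)
    (hiter : ∀ R, 0 ≤ R → R ≤ R₀ → φ (lam * R) ≤ A * φ R + B * R ^ α)
    (hR : 0 ≤ R) (hRR₀ : R ≤ R₀) (k : ℕ) :
    φ (lam ^ k * R) ≤ max A (lam ^ α) ^ k * (φ R + B * R ^ α / |A - lam ^ α|) := by
  have hBR : 0 ≤ B * R ^ α := by positivity
  calc φ (lam ^ k * R)
      ≤ A ^ k * φ R + B * R ^ α * ((A ^ k - (lam ^ α) ^ k) / (A - lam ^ α)) :=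
        apply_pow_mul_le hA hlam hlam1 hne hiter hR hRR₀ k
    _ ≤ max A (lam ^ α) ^ k * φ R + B * R ^ α * (max A (lam ^ α) ^ k / |A - lam ^ α|) :=
        add_le_add
          (mul_le_mul_of_nonneg_right (pow_le_pow_left₀ hA (le_max_left _ _) k) (hφ0 R hR))
          (mul_le_mul_of_nonneg_left
            (pow_sub_pow_div_sub_le_max_pow_div_abs hA (by positivity) k) hBR)
    _ = max A (lam ^ α) ^ k * (φ R + B * R ^ α / |A - lam ^ α|) := by ring

end Iteration

lemma MonotoneOn.le_rpow_div_mul_of_le_pow_mul {φ : ℝ → ℝ} {lam β C R r : ℝ}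
    (hmono : MonotoneOn φ (Ici 0)) (hlam : 0 < lam) (hlam1 : lam < 1) (hβ : 0 ≤ β)
    (hC : 0 ≤ C) (hr : 0 < r) (hrR : r ≤ R)
    (h : ∀ k : ℕ, φ (lam ^ k * R) ≤ (lam ^ β) ^ k * C) :
    φ r ≤ (r / R) ^ β / lam ^ β * C := by
  have hR : 0 < R := hr.trans_le hrR
  obtain ⟨k, hlt, hle⟩ := exists_nat_pow_near_of_lt_one (div_pos hr hR)
    ((div_le_one hR).mpr hrR) hlam hlam1
  have hpow : (lam ^ β) ^ (k + 1) ≤ (r / R) ^ β := by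
    rw [Real.rpow_pow_comm hlam.le]
    exact Real.rpow_le_rpow (by positivity) hlt.le hβ
  calc φ r ≤ φ (lam ^ k * R) :=
        hmono hr.le (by positivity : (0:ℝ) ≤ lam ^ k * R) ((div_le_iff₀ hR).mp hle)
    _ ≤ (lam ^ β) ^ k * C := h k
    _ = (lam ^ β) ^ (k + 1) / lam ^ β * C := by
        rw [pow_succ, mul_div_cancel_right₀ _ (by positivity)]
    _ ≤ (r / R) ^ β / lam ^ β * C := by gcongr

theorem iteration_lemma_general (A lam α B R₀ : ℝ)
    (hA : 0 < A) (hA1 : A < 1) (hlam : 0 < lam) (hlam1 : lam < 1)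
    (hα : 0 < α) (hne : A ≠ lam ^ α) (hB : 0 ≤ B)
    (φ : ℝ → ℝ) (hφ0 : ∀ r, 0 ≤ r → 0 ≤ φ r) (hmono : MonotoneOn φ (Set.Ici (0:ℝ)))
    (hiter : ∀ R, 0 ≤ R → R ≤ R₀ → φ (lam * R) ≤ A * φ R + B * R ^ α) :
    ∀ R, 0 ≤ R → R ≤ R₀ → ∀ r, 0 ≤ r → r ≤ R →
      φ r ≤ (1 / A) * (r / R) ^ min (Real.logb lam A) α *
        (φ R + B * R ^ α / |A - lam ^ α|) := by
  intro R hR hRR₀ r hr hrR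
  set β := min (Real.logb lam A) α
  have hβ : 0 < β := lt_min (Real.logb_pos_of_base_lt_one hlam hlam1 hA hA1) hα
  have hlamβ : lam ^ β = max A (lam ^ α) := by
    rw [(Real.antitone_rpow_of_base_le_one hlam hlam1.le).map_min,
      Real.rpow_logb hlam hlam1.ne hA]
  rcases hr.eq_or_lt with rfl | hr
  · -- the recursion at radius 0 reads `φ 0 ≤ A φ 0`
    have h0 := hiter 0 le_rfl (hR.trans hRR₀)
    rw [mul_zero, Real.zero_rpow hα.ne', mul_zero, add_zero] at h0
    rw [zero_div, Real.zero_rpow hβ.ne', mul_zero, zero_mul]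
    nlinarith
  · have hC : 0 ≤ φ R + B * R ^ α / |A - lam ^ α| := by
      have := hφ0 R hR
      positivity
    calc φ r ≤ (r / R) ^ β / lam ^ β * (φ R + B * R ^ α / |A - lam ^ α|) :=
          hmono.le_rpow_div_mul_of_le_pow_mul hlam hlam1 hβ.le hC hr hrR fun k => hlamβ ▸
            apply_pow_mul_le_max_pow hA.le hlam.le hlam1.le hne hB hφ0 hiter hR hRR₀ k
      _ ≤ 1 / A * (r / R) ^ β * (φ R + B * R ^ α / |A - lam ^ α|) := by
          rw [hlamβ, div_eq_mul_one_div, mul_comm ((r / R) ^ β)]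
          gcongr
          exact le_max_left A _

/-- iteration lemma for increasing functions `φ : [0,∞) → [0,∞)`. -/
theorem iteration_lemma (A lam α B R₀ : ℝ)
    (hA : 0 < A) (hA1 : A < 1) (hlam : 0 < lam) (hlam1 : lam < 1)
    (hα : 0 < α) (hα1 : α < 1) (hne : A ≠ lam ^ α) (hB : 0 ≤ B) (hR₀ : 0 ≤ R₀)
    (φ : ℝ → ℝ) (hφ0 : ∀ r, 0 ≤ r → 0 ≤ φ r) (hmono : MonotoneOn φ (Set.Ici (0:ℝ)))
    (hiter : ∀ R, 0 ≤ R → R ≤ R₀ → φ (lam * R) ≤ A * φ R + B * R ^ α) :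
    ∀ R, 0 ≤ R → R ≤ R₀ → ∀ r, 0 ≤ r → r ≤ R →
      φ r ≤ (1 / A) * (r / R) ^ min (Real.logb lam A) α *
        (φ R + B * R ^ α / |A - lam ^ α|) :=
  iteration_lemma_general A lam α B R₀ hA hA1 hlam hlam1 hα hne hB φ hφ0 hmono hiter
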